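/- Let $J_n$ be the block Jacobi matrix of a matrix measure on $[0,1]$ with canonical moments $U_1, \ldots, U_{2n-1}$ satisfying $\mathbf{0} < U_k < \mathbf{1}$. Then $\det(J_n) = \left(\prod_{k=1}^{n} \det U_{2k-1}\right)\left(\prod_{k=1}^{n-1} \det(\mathbf{1} - U_{2k})\right)$. -/

import Mathlib

/-!
Conjugating by the block diagonal matrix `diag(S₀, …, S_{n-1})` turns `J_n` into the monic block
Jacobi matrix with diagonal blocks `u_k`, superdiagonal blocks `v_{k+1}` and identity subdiagonal
blocks; this is where `γ_{k+1} = γ_k v_{k+1}` enters. Since `u_k = ζ_{2k+1} + ζ_{2k}` and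
`v_{k+1} = ζ_{2k+1} ζ_{2k+2}`, the monic matrix is the product of a block lower bidiagonal matrix with
diagonal `ζ₁, ζ₃, …` and identity subdiagonal and a block upper unitriangular matrix with
superdiagonal `ζ₂, ζ₄, …`. Hence `det J_n = ∏ det ζ_{2k+1}`, and `ζ_{2k+1} = (1 - U_{2k}) U_{2k+1}`.
-/

open Matrix
open scoped ComplexOrder

namespace Matrix

variable {α : Type*} {n : ℕ}

section Zero

variable [Zero α]

def superdiagonal (n : ℕ) (a : ℕ → α) : Matrix (Fin n) (Fin n) α :=
  of fun i j => if (j : ℕ) = i + 1 then a i else 0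

def subdiagonal (n : ℕ) (c : ℕ → α) : Matrix (Fin n) (Fin n) α :=
  of fun i j => if (i : ℕ) = j + 1 then c j else 0

theorem blockTriangular_superdiagonal (a : ℕ → α) :
    (superdiagonal n a).BlockTriangular id := by
  intro i j hij
  have : (j : ℕ) < i := hij
  simp only [superdiagonal, of_apply, ite_eq_right_iff]
  omega

theorem blockTriangular_subdiagonal (c : ℕ → α) :
    (subdiagonal n c).BlockTriangular OrderDual.toDual := by
  intro i j hij
  have : (i : ℕ) < j := hij
  simp only [subdiagonal, of_apply, ite_eq_right_iff]
  omega

end Zero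

def tridiagonal [AddZeroClass α] (n : ℕ) (b a c : ℕ → α) : Matrix (Fin n) (Fin n) α :=
  diagonal (fun i : Fin n => b i) + superdiagonal n a + subdiagonal n c

theorem comp_tridiagonal_apply {m R : Type*} [AddZeroClass R] (b a c : ℕ → Matrix m m R)
    (i j : Fin n) (x y : m) :
    comp (Fin n) (Fin n) m m R (tridiagonal n b a c) (i, x) (j, y) =
      if i = j then b i x y
      else if (j : ℕ) = i + 1 then a i x y
      else if (i : ℕ) = j + 1 then c j x y
      else 0 := by
  simp only [comp_apply, tridiagonal, superdiagonal, subdiagonal, add_apply, diagonal_apply,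
    of_apply]
  by_cases hij : i = j
  · subst hij
    simp
  · have hij' : (i : ℕ) ≠ j := fun h => hij (Fin.ext h)
    split_ifs <;> first | omega | simp

section Semiring

variable [NonUnitalNonAssocSemiring α] (s : ℕ → α)

theorem diagonal_mul_superdiagonal (a : ℕ → α) :
    diagonal (fun i : Fin n => s i) * superdiagonal n a =
      superdiagonal n (fun i => s i * a i) := by
  ext i j
  simp [superdiagonal, diagonal_mul]

theorem superdiagonal_mul_diagonal (a : ℕ → α) :
    superdiagonal n a * diagonal (fun i : Fin n => s i) =
      superdiagonal n (fun i => a i * s (i + 1)) := by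
  ext i j
  simp only [superdiagonal, mul_diagonal, of_apply]
  split_ifs with h <;> simp [h]

theorem diagonal_mul_subdiagonal (c : ℕ → α) :
    diagonal (fun i : Fin n => s i) * subdiagonal n c =
      subdiagonal n (fun j => s (j + 1) * c j) := by
  ext i j
  simp only [subdiagonal, diagonal_mul, of_apply]
  split_ifs with h <;> simp [h]

theorem subdiagonal_mul_diagonal (c : ℕ → α) :
    subdiagonal n c * diagonal (fun i : Fin n => s i) =
      subdiagonal n (fun j => c j * s j) := by
  ext i j
  simp [subdiagonal, mul_diagonal]

theorem tridiagonal_mul_diagonal (b a c : ℕ → α) :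
    tridiagonal n b a c * diagonal (fun i : Fin n => s i) =
      tridiagonal n (fun i => b i * s i) (fun i => a i * s (i + 1)) (fun j => c j * s j) := by
  simp only [tridiagonal, add_mul, diagonal_mul_diagonal, superdiagonal_mul_diagonal,
    subdiagonal_mul_diagonal]

theorem diagonal_mul_tridiagonal (b a c : ℕ → α) :
    diagonal (fun i : Fin n => s i) * tridiagonal n b a c =
      tridiagonal n (fun i => s i * b i) (fun i => s i * a i) (fun j => s (j + 1) * c j) := by
  simp only [tridiagonal, mul_add, diagonal_mul_diagonal, diagonal_mul_superdiagonal,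
    diagonal_mul_subdiagonal]

theorem subdiagonal_mul_superdiagonal (c e : ℕ → α) :
    subdiagonal n c * superdiagonal n e =
      diagonal (fun i : Fin n => if (i : ℕ) = 0 then 0 else c (i - 1) * e (i - 1)) := by
  ext i j
  simp only [mul_apply, diagonal_apply, subdiagonal, superdiagonal, of_apply, ite_mul, zero_mul,
    mul_ite, mul_zero]
  obtain ⟨_ | k, hk⟩ := i
  · simp
  · rw [Finset.sum_eq_single ⟨k, by omega⟩]
    · simp [Fin.ext_iff, eq_comm]
    · intro l _ hl
      have : ¬ k = l := fun h => hl (Fin.ext h.symm)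
      simp [this]
    · simp

end Semiring

theorem tridiagonal_eq_mul [NonAssocSemiring α] {b a c d e : ℕ → α} (hb₀ : b 0 = d 0)
    (hb : ∀ i, b (i + 1) = d (i + 1) + c i * e i) (ha : ∀ i, a i = d i * e i) :
    tridiagonal n b a c =
      (diagonal (fun i : Fin n => d i) + subdiagonal n c) * (1 + superdiagonal n e) := by
  have hdiag : diagonal (fun i : Fin n => b i) = diagonal (fun i : Fin n => d i) +
      diagonal (fun i : Fin n => if (i : ℕ) = 0 then 0 else c (i - 1) * e (i - 1)) := by
    rw [diagonal_add]
    congr 1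
    funext i
    obtain ⟨_ | k, hk⟩ := i
    · simp [hb₀]
    · simp [hb]
  rw [tridiagonal, hdiag, funext ha, add_mul, mul_add, mul_add, mul_one, mul_one,
    diagonal_mul_superdiagonal, subdiagonal_mul_superdiagonal]
  abel

variable {ι m R : Type*} [Fintype ι] [DecidableEq ι] [Fintype m] [DecidableEq m] [CommRing R]

theorem det_comp_of_blockTriangular {β : Type*} [LinearOrder β] (e : ι ≃ β)
    {M : Matrix ι ι (Matrix m m R)} (h : M.BlockTriangular e) :
    (comp ι ι m m R M).det = ∏ i, (M i i).det := by
  have := Fintype.ofEquiv ι e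
  rw [h.comp.det_fintype, ← e.prod_comp]
  refine Finset.prod_congr rfl fun i _ => ?_
  let toBlock : m ≃ {x : ι × m // e x.1 = e i} :=
    { toFun := fun a => ⟨(i, a), rfl⟩
      invFun := fun x => x.1.2
      left_inv := fun _ => rfl
      right_inv := fun x => Subtype.ext (Prod.ext (e.injective x.2).symm rfl) }
  rw [← det_submatrix_equiv_self toBlock]
  rfl

theorem det_comp_eq_of_mul_diagonal_eq {M N : Matrix ι ι (Matrix m m R)} {s : ι → Matrix m m R}
    (hs : ∀ i, IsUnit (s i).det) (h : M * diagonal s = diagonal s * N) :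
    (comp ι ι m m R M).det = (comp ι ι m m R N).det := by
  have hdet := congrArg (fun X => (compRingEquiv ι m R X).det) h
  simp only [map_mul, compRingEquiv_apply, det_mul] at hdet
  have hunit : IsUnit (comp ι ι m m R (diagonal s)).det := by
    rw [det_comp_of_blockTriangular (Fintype.equivFin ι) (blockTriangular_diagonal s)]
    simpa using IsUnit.prod_univ_iff.mpr hs
  exact hunit.mul_left_cancel (by rw [mul_comm, hdet])

theorem det_comp_tridiagonal {b a c d e : ℕ → Matrix m m R} (hb₀ : b 0 = d 0)
    (hb : ∀ i, b (i + 1) = d (i + 1) + c i * e i) (ha : ∀ i, a i = d i * e i) :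
    (comp (Fin n) (Fin n) m m R (tridiagonal n b a c)).det = ∏ i : Fin n, (d i).det := by
  rw [tridiagonal_eq_mul hb₀ hb ha, ← compRingEquiv_apply, map_mul, det_mul, compRingEquiv_apply,
    compRingEquiv_apply,
    det_comp_of_blockTriangular OrderDual.toDual
      ((blockTriangular_diagonal _).add (blockTriangular_subdiagonal c)),
    det_comp_of_blockTriangular (Equiv.refl _)
      (blockTriangular_one.add (blockTriangular_superdiagonal e))]
  simp [subdiagonal, superdiagonal]

theorem det_comp_tridiagonal_eq_prod_odd {ζ u v : ℕ → Matrix m m R} (hζ₀ : ζ 0 = 0)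
    (hu : ∀ k, u k = ζ (2 * k + 1) + ζ (2 * k))
    (hv : ∀ k, 1 ≤ k → v k = ζ (2 * k - 1) * ζ (2 * k)) :
    (comp (Fin n) (Fin n) m m R (tridiagonal n u (fun i => v (i + 1)) 1)).det =
      ∏ i : Fin n, (ζ (2 * i + 1)).det := by
  refine det_comp_tridiagonal (d := fun i => ζ (2 * i + 1)) (e := fun i => ζ (2 * i + 2))
    ?_ (fun i => ?_) (fun i => ?_)
  · rw [hu, hζ₀, add_zero]
  · rw [hu, Pi.one_apply, Matrix.one_mul]
    rfl
  · rw [hv _ le_add_self]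
    rfl

end Matrix

theorem Finset.prod_range_eq_mul_prod_Icc {M : Type*} [CommMonoid M] {f g h : ℕ → M} (n : ℕ)
    (h₀ : f 0 = g 0) (hsucc : ∀ k, f (k + 1) = g (k + 1) * h (k + 1)) :
    ∏ k ∈ range n, f k = (∏ k ∈ range n, g k) * ∏ k ∈ Icc 1 (n - 1), h k := by
  cases n with
  | zero => simp
  | succ m =>
    rw [prod_range_succ', prod_range_succ', Nat.add_sub_cancel, ← Ico_add_one_right_eq_Icc,
      prod_Ico_eq_prod_range, Nat.add_sub_cancel]
    simp only [hsucc, h₀, prod_mul_distrib, add_comm 1]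
    ac_rfl

theorem det_block_jacobi_general (p n : ℕ)
    (U ζ u v γ S B A : ℕ → Matrix (Fin p) (Fin p) ℂ)
    (hζ0 : ζ 0 = 0) (hζ1 : ζ 1 = U 1)
    (hζ : ∀ k, 2 ≤ k → ζ k = (1 - U (k - 1)) * U k)
    (hu : ∀ k, u k = ζ (2 * k + 1) + ζ (2 * k))
    (hv : ∀ k, 1 ≤ k → v k = ζ (2 * k - 1) * ζ (2 * k))
    (hγ : ∀ k, 1 ≤ k → γ k = γ (k - 1) * v k)
    (hS : ∀ k, (S k).PosDef ∧ S k * S k = γ k)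
    (hB : ∀ k, 1 ≤ k → B k = S (k - 1) * u (k - 1) * (S (k - 1))⁻¹)
    (hA : ∀ k, 1 ≤ k → A k = (S (k - 1))⁻¹ * S k)
    (J : Matrix (Fin n × Fin p) (Fin n × Fin p) ℂ)
    (hJ : ∀ (i : Fin n) (a : Fin p) (j : Fin n) (b : Fin p),
      J (i, a) (j, b) =
        if i = j then B ((i : ℕ) + 1) a b
        else if (j : ℕ) = (i : ℕ) + 1 then A ((i : ℕ) + 1) a b
        else if (i : ℕ) = (j : ℕ) + 1 then (A ((j : ℕ) + 1))ᴴ a b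
        else 0) :
    J.det = (∏ k ∈ Finset.range n, (U (2 * k + 1)).det)
      * ∏ k ∈ Finset.Icc 1 (n - 1), ((1 : Matrix (Fin p) (Fin p) ℂ) - U (2 * k)).det := by
  have hSunit : ∀ k, IsUnit (S k).det := fun k => (hS k).1.det_pos.ne'.isUnit
  have hSH : ∀ k, (S k)ᴴ = S k := fun k => (hS k).1.isHermitian
  calc J.det = (comp _ _ _ _ _ (tridiagonal n (fun i => B (i + 1)) (fun i => A (i + 1))
        fun i => (A (i + 1))ᴴ)).det := by
        congr 1
        ext ⟨i, x⟩ ⟨j, y⟩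
        rw [hJ, comp_tridiagonal_apply]
    _ = (comp _ _ _ _ _ (tridiagonal n u (fun i => v (i + 1)) 1)).det := by
        refine det_comp_eq_of_mul_diagonal_eq (fun i => hSunit i) ?_
        rw [tridiagonal_mul_diagonal, diagonal_mul_tridiagonal]
        congr 1 <;> funext i
        · rw [hB _ le_add_self, Nat.add_sub_cancel, nonsing_inv_mul_cancel_right _ _ (hSunit i)]
        · rw [hA _ le_add_self, Nat.add_sub_cancel, Matrix.mul_assoc, (hS _).2, hγ _ le_add_self,
            Nat.add_sub_cancel, ← (hS i).2, Matrix.mul_assoc,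
            nonsing_inv_mul_cancel_left _ _ (hSunit i)]
        · rw [hA _ le_add_self, Nat.add_sub_cancel, conjTranspose_mul, conjTranspose_nonsing_inv,
            hSH, hSH, nonsing_inv_mul_cancel_right _ _ (hSunit i), Pi.one_apply, Matrix.mul_one]
    _ = ∏ i : Fin n, (ζ (2 * i + 1)).det := det_comp_tridiagonal_eq_prod_odd hζ0 hu hv
    _ = _ := by
        rw [Fin.prod_univ_eq_prod_range (fun i => (ζ (2 * i + 1)).det)]
        refine Finset.prod_range_eq_mul_prod_Icc n (by rw [hζ1]) fun k => ?_
        rw [hζ _ (by omega), Nat.add_sub_cancel, det_mul, mul_comm]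

/-- For the `np × np` Hermitian block Jacobi matrix `J_n` of a matrix measure on
`[0,1]` with canonical moments `U_1, …, U_{2n-1}` satisfying `0 < U_k < 1`,
one has `det J_n = (∏_{k=1}^{n} det U_{2k-1})(∏_{k=1}^{n-1} det(1 - U_{2k}))`.
Here `ζ, u, v` are the Dette–Studden decomposition of the recursion coefficients,
`γ_k` the Gram matrices (with `γ_0 = 1` and `γ_k = γ_{k-1} v_k`), `S_k` the positive
definite square root of `γ_k`, and `B_k = γ_{k-1}^{1/2} u_{k-1} γ_{k-1}^{-1/2}`,
`Ã_k = γ_{k-1}^{-1/2} γ_k^{1/2}` the Hermitian (orthonormal) recursion coefficients. -/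
theorem det_block_jacobi (p n : ℕ) (hp : 0 < p) (hn : 0 < n)
    (U ζ u v γ S B A : ℕ → Matrix (Fin p) (Fin p) ℂ)
    (hU : ∀ k, 1 ≤ k → k ≤ 2 * n - 1 →
      (U k).PosDef ∧ ((1 : Matrix (Fin p) (Fin p) ℂ) - U k).PosDef)
    (hζ0 : ζ 0 = 0) (hζ1 : ζ 1 = U 1)
    (hζ : ∀ k, 2 ≤ k → ζ k = (1 - U (k - 1)) * U k)
    (hu : ∀ k, u k = ζ (2 * k + 1) + ζ (2 * k))
    (hv : ∀ k, 1 ≤ k → v k = ζ (2 * k - 1) * ζ (2 * k))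
    (hγ0 : γ 0 = 1)
    (hγ : ∀ k, 1 ≤ k → γ k = γ (k - 1) * v k)
    (hS : ∀ k, (S k).PosDef ∧ S k * S k = γ k)
    (hB : ∀ k, 1 ≤ k → B k = S (k - 1) * u (k - 1) * (S (k - 1))⁻¹)
    (hA : ∀ k, 1 ≤ k → A k = (S (k - 1))⁻¹ * S k)
    (J : Matrix (Fin n × Fin p) (Fin n × Fin p) ℂ)
    (hJ : ∀ (i : Fin n) (a : Fin p) (j : Fin n) (b : Fin p),
      J (i, a) (j, b) =
        if i = j then B ((i : ℕ) + 1) a b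
        else if (j : ℕ) = (i : ℕ) + 1 then A ((i : ℕ) + 1) a b
        else if (i : ℕ) = (j : ℕ) + 1 then (A ((j : ℕ) + 1))ᴴ a b
        else 0) :
    J.det = (∏ k ∈ Finset.range n, (U (2 * k + 1)).det)
      * ∏ k ∈ Finset.Icc 1 (n - 1), ((1 : Matrix (Fin p) (Fin p) ℂ) - U (2 * k)).det :=
  det_block_jacobi_general p n U ζ u v γ S B A hζ0 hζ1 hζ hu hv hγ hS hB hA J hJ
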